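/- Let k ≥ 2 and let κ be the multiplicative function with κ(p^{uk+v}) = p^{-u-1} for 2 ≤ v ≤ k and κ(p^{uk+1}) = k p^{-u-1/2}. Then uniformly for q ∈ ℕ and A ≥ 1, one has Σ_{1 ≤ a ≤ A} κ(q/(q;a)) ≪ A q^ε κ(q), where (q;a) denotes gcd(q,a) and the implied constant depends only on k and ε. -/

import Mathlib

/-!
Sorting `a` by `d = (q, a)`, at most `A / d` of the `a ≤ A` have `(q, a) = d`, so the sum is at
most `(A / q) Σ_{d ∣ q} d κ(d)`. The function `d κ(d)` is multiplicative, and on the powers of a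
prime `p` it is `√p ^ w(n)` up to a factor in `[1, k]`, with `w` strictly increasing. So each local
factor `Σ_{j ≤ m} p^j κ(p^j)` is at most `1 + k / (√p - 1)` times its last term, and the product of
these factors over `p ∣ q` is `≪_ε q^ε`: all but boundedly many of them are at most `2^ε ≤ p^ε`.
-/

open Real Finset Filter Topology

theorem sum_Icc_apply_div_gcd_le {f : ℕ → ℝ} {q : ℕ} (hq : q ≠ 0)
    (hf : ∀ d ∈ q.divisors, 0 ≤ f d) {A : ℝ} (hA : 0 ≤ A) :
    ∑ a ∈ Icc 1 ⌊A⌋₊, f (q / q.gcd a) ≤ A / q * ∑ d ∈ q.divisors, d * f d := by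
  set N := ⌊A⌋₊
  rw [show Icc 1 N = Ioc 0 N from Icc_add_one_left_eq_Ioc 0 N,
    ← sum_fiberwise_of_maps_to (t := q.divisors) (g := q.gcd)
      fun a _ => Nat.mem_divisors.2 ⟨Nat.gcd_dvd_left q a, hq⟩,
    ← Nat.sum_div_divisors q fun d => (d : ℝ) * f d, mul_sum]
  refine sum_le_sum fun d hd => ?_
  have hdq : d ∣ q := Nat.dvd_of_mem_divisors hd
  have hd : (0 : ℝ) < d := by exact_mod_cast Nat.pos_of_mem_divisors hd
  have hfd : 0 ≤ f (q / d) := hf _ (Nat.mem_divisors.2 ⟨Nat.div_dvd_of_dvd hdq, hq⟩)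
  have hcard : #{a ∈ Ioc 0 N | q.gcd a = d} ≤ N / d :=
    (card_le_card fun a ha => by
      simp only [mem_filter] at ha ⊢
      exact ⟨ha.1, ha.2 ▸ Nat.gcd_dvd_right q a⟩).trans (Nat.Ioc_filter_dvd_card_eq_div N d).le
  calc ∑ a ∈ Ioc 0 N with q.gcd a = d, f (q / q.gcd a)
      = #{a ∈ Ioc 0 N | q.gcd a = d} * f (q / d) := by
        rw [sum_congr rfl fun a ha => by rw [(mem_filter.1 ha).2], sum_const, nsmul_eq_mul]
    _ ≤ A / d * f (q / d) := by
        gcongr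
        calc (#{a ∈ Ioc 0 N | q.gcd a = d} : ℝ) ≤ (N / d : ℕ) := by exact_mod_cast hcard
          _ ≤ N / d := Nat.cast_div_le
          _ ≤ A / d := by gcongr; exact Nat.floor_le hA
    _ = A / q * ((q / d : ℕ) * f (q / d)) := by
        rw [Nat.cast_div hdq hd.ne']
        field_simp

theorem sum_divisors_eq_prod_primeFactors {R : Type*} [CommSemiring R] {f : ℕ → R}
    (hf1 : f 1 = 1) (hf : ∀ m n, m.Coprime n → f (m * n) = f m * f n) {n : ℕ} (hn : n ≠ 0) :
    ∑ d ∈ n.divisors, f d =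
      ∏ p ∈ n.primeFactors, ∑ j ∈ range (n.factorization p + 1), f (p ^ j) := by
  let F : ArithmeticFunction R := ⟨fun n => if n = 0 then 0 else f n, if_pos rfl⟩
  have hF_apply {n : ℕ} (hn : n ≠ 0) : F n = f n := if_neg hn
  have hF : F.IsMultiplicative :=
    ArithmeticFunction.IsMultiplicative.iff_ne_zero.2 ⟨(hF_apply one_ne_zero).trans hf1,
      fun hm hn hmn => by rw [hF_apply (mul_ne_zero hm hn), hF_apply hm, hF_apply hn, hf _ _ hmn]⟩
  have hsum (n : ℕ) : (F * ArithmeticFunction.zeta) n = ∑ d ∈ n.divisors, f d := by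
    rw [ArithmeticFunction.coe_mul_zeta_apply]
    exact sum_congr rfl fun d hd => hF_apply (Nat.pos_of_mem_divisors hd).ne'
  rw [← hsum, (hF.mul ArithmeticFunction.isMultiplicative_zeta.natCast).multiplicative_factorization
    _ hn, Nat.prod_factorization_eq_prod_primeFactors]
  refine prod_congr rfl fun p hp => ?_
  rw [hsum, Nat.sum_divisors_prime_pow (Nat.prime_of_mem_primeFactors hp)]

theorem nonneg_of_prime_pow_nonneg {f : ℕ → ℝ} (hf1 : f 1 = 1)
    (hf : ∀ m n, m.Coprime n → f (m * n) = f m * f n) (hpow : ∀ p, p.Prime → ∀ j, 0 ≤ f (p ^ j))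
    {n : ℕ} (hn : n ≠ 0) : 0 ≤ f n := by
  rw [Nat.multiplicative_factorization f hf hf1 hn, Nat.prod_factorization_eq_prod_primeFactors]
  exact prod_nonneg fun p hp => hpow p (Nat.prime_of_mem_primeFactors hp) _

theorem sum_divisors_le_prod_primeFactors_mul {f c : ℕ → ℝ} (hf1 : f 1 = 1)
    (hf : ∀ m n, m.Coprime n → f (m * n) = f m * f n) (hpow : ∀ p, p.Prime → ∀ j, 0 ≤ f (p ^ j))
    (hc : ∀ p, p.Prime → ∀ m, ∑ j ∈ range (m + 1), f (p ^ j) ≤ c p * f (p ^ m))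
    {n : ℕ} (hn : n ≠ 0) :
    ∑ d ∈ n.divisors, f d ≤ (∏ p ∈ n.primeFactors, c p) * f n := by
  rw [sum_divisors_eq_prod_primeFactors hf1 hf hn, Nat.multiplicative_factorization f hf hf1 hn,
    Nat.prod_factorization_eq_prod_primeFactors, ← prod_mul_distrib]
  exact prod_le_prod
    (fun p hp => sum_nonneg fun j _ => hpow p (Nat.prime_of_mem_primeFactors hp) j)
    fun p hp => hc p (Nat.prime_of_mem_primeFactors hp) _

theorem exists_prod_primeFactors_one_add_le_mul_rpow {g : ℕ → ℝ}
    (hg0 : ∀ p, p.Prime → 0 ≤ g p) (hg : Tendsto g atTop (𝓝 0)) {ε : ℝ} (hε : 0 < ε) :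
    ∃ C, 0 < C ∧ ∀ n : ℕ, n ≠ 0 → ∏ p ∈ n.primeFactors, (1 + g p) ≤ C * (n : ℝ) ^ ε := by
  obtain ⟨B, hB⟩ := eventually_atTop.1
    (hg.eventually (gt_mem_nhds (sub_pos.2 (one_lt_rpow one_lt_two hε))))
  have hone (p : ℕ) (hp : p.Prime) : 1 ≤ 1 + g p := le_add_of_nonneg_right (hg0 p hp)
  have hnonneg (p : ℕ) (hp : p.Prime) : 0 ≤ 1 + g p := zero_le_one.trans (hone p hp)
  have hC : 0 < ∏ p ∈ range B with p.Prime, (1 + g p) :=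
    prod_pos fun p hp => one_pos.trans_le (hone p (mem_filter.1 hp).2)
  refine ⟨_, hC, fun n hn => ?_⟩
  rw [← prod_filter_mul_prod_filter_not n.primeFactors (· < B)]
  refine mul_le_mul ?_ ?_
    (prod_nonneg fun p hp => hnonneg p (Nat.prime_of_mem_primeFactors (mem_filter.1 hp).1)) hC.le
  · refine prod_le_prod_of_subset_of_one_le (fun p hp => ?_)
      (fun p hp => hnonneg p (Nat.prime_of_mem_primeFactors (mem_filter.1 hp).1))
      fun p hp _ => hone p (mem_filter.1 hp).2
    simp only [mem_filter, mem_range, Nat.mem_primeFactors] at hp ⊢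
    exact ⟨hp.2, hp.1.1⟩
  set L := {p ∈ n.primeFactors | ¬p < B}
  have hL (p : ℕ) (hp : p ∈ L) : p.Prime ∧ B ≤ p := by
    simp only [L, mem_filter, Nat.mem_primeFactors, not_lt] at hp
    exact ⟨hp.1.1, hp.2⟩
  calc ∏ p ∈ L, (1 + g p) ≤ ∏ p ∈ L, (p : ℝ) ^ ε := by
        refine prod_le_prod (fun p hp => hnonneg p (hL p hp).1) fun p hp => ?_
        have h2p : (2 : ℝ) ≤ p := by exact_mod_cast (hL p hp).1.two_le
        linarith [hB p (hL p hp).2, rpow_le_rpow zero_le_two h2p hε.le]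
    _ = ((∏ p ∈ L, p : ℕ) : ℝ) ^ ε := by
        rw [finsetProd_rpow _ _ (fun p _ => Nat.cast_nonneg p), Nat.cast_prod]
    _ ≤ (n : ℝ) ^ ε := by
        refine rpow_le_rpow (Nat.cast_nonneg _) ?_ hε.le
        exact_mod_cast Nat.le_of_dvd (Nat.pos_of_ne_zero hn)
          ((prod_dvd_prod_of_subset _ _ _ (filter_subset _ _)).trans (Nat.prod_primeFactors_dvd n))

theorem sum_range_le_div_sub_one_of_mul_le_succ {g : ℕ → ℝ} {r : ℝ} (hr : 1 < r)
    (hg0 : 0 ≤ g 0) (hg : ∀ n, r * g n ≤ g (n + 1)) (m : ℕ) :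
    ∑ j ∈ range m, g j ≤ g m / (r - 1) := by
  have hr' : 0 < r - 1 := sub_pos.2 hr
  induction m with
  | zero => simpa using div_nonneg hg0 hr'.le
  | succ m ih =>
    rw [le_div_iff₀ hr'] at ih ⊢
    rw [sum_range_succ]
    nlinarith [hg m]

theorem sum_range_succ_le_of_le_of_le_mul {g h : ℕ → ℝ} {r K : ℝ} (hr : 1 < r) (hK : 0 ≤ K)
    (hg0 : 0 ≤ g 0) (hg : ∀ n, r * g n ≤ g (n + 1)) (hgh : ∀ n, g n ≤ h n)
    (hhg : ∀ n, h n ≤ K * g n) (m : ℕ) :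
    ∑ j ∈ range (m + 1), h j ≤ (1 + K / (r - 1)) * h m := by
  have hr' : 0 < r - 1 := sub_pos.2 hr
  calc ∑ j ∈ range (m + 1), h j
      = ∑ j ∈ range m, h j + h m := sum_range_succ h m
    _ ≤ K * (g m / (r - 1)) + h m := by
      gcongr
      calc ∑ j ∈ range m, h j ≤ ∑ j ∈ range m, K * g j := sum_le_sum fun j _ => hhg j
        _ = K * ∑ j ∈ range m, g j := (mul_sum ..).symm
        _ ≤ K * (g m / (r - 1)) := by
          gcongr; exact sum_range_le_div_sub_one_of_mul_le_succ hr hg0 hg m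
    _ ≤ K * (h m / (r - 1)) + h m := by gcongr; exact hgh m
    _ = (1 + K / (r - 1)) * h m := by ring

/-- `p ^ n * κ (p ^ n) = c * √p ^ kappaWeight k n` with `c = k` if `n ≡ 1 [MOD k]` and `c = 1`
otherwise; `(n + k - 1) / k` is `⌈n / k⌉`. -/
def kappaWeight (k n : ℕ) : ℕ := 2 * n + (if n % k = 1 then 1 else 0) - 2 * ((n + k - 1) / k)

theorem exists_eq_mul_add_of_pos {k n : ℕ} (hk : 0 < k) (hn : 0 < n) :
    ∃ u v, 1 ≤ v ∧ v ≤ k ∧ n = u * k + v :=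
  ⟨(n - 1) / k, (n - 1) % k + 1, by omega, Nat.mod_lt _ hk,
    by have := Nat.div_add_mod' (n - 1) k; omega⟩

theorem kappaWeight_mul_add {k u v : ℕ} (hk : 2 ≤ k) (hv : 1 ≤ v) (hvk : v ≤ k) :
    kappaWeight k (u * k + v) + 2 * (u + 1) = 2 * (u * k + v) + if v = 1 then 1 else 0 := by
  have hdiv : (u * k + v + k - 1) / k = u + 1 := by
    rw [show u * k + v + k - 1 = (v - 1) + (u + 1) * k by rw [add_mul]; omega,
      Nat.add_mul_div_right _ _ (by omega), Nat.div_eq_of_lt (by omega), zero_add]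
  have hmod : (u * k + v) % k = 1 ↔ v = 1 := by
    rw [mul_comm, Nat.mul_add_mod]
    rcases hvk.lt_or_eq with hvk | rfl
    · rw [Nat.mod_eq_of_lt hvk]
    · simp only [Nat.mod_self]; omega
  have : u ≤ u * k := Nat.le_mul_of_pos_right u (by omega)
  simp only [kappaWeight, hdiv, hmod]
  split_ifs <;> omega

theorem kappaWeight_strictMono {k : ℕ} (hk : 2 ≤ k) : StrictMono (kappaWeight k) := by
  refine strictMono_nat_of_lt_succ fun n => ?_
  rcases Nat.eq_zero_or_pos n with rfl | hn
  · show kappaWeight k 0 < kappaWeight k 1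
    have h0 : kappaWeight k 0 = 0 := by simp [kappaWeight]
    have h1 := kappaWeight_mul_add (u := 0) hk le_rfl (by omega)
    norm_num at h1
    omega
  obtain ⟨u, v, hv, hvk, rfl⟩ := exists_eq_mul_add_of_pos (k := k) (by omega) hn
  have hn := kappaWeight_mul_add (u := u) hk hv hvk
  rcases hvk.lt_or_eq with hvk | hvk
  · have := kappaWeight_mul_add (u := u) hk (by omega : 1 ≤ v + 1) hvk
    rw [← add_assoc] at this
    split_ifs at hn this <;> omega
  · have := kappaWeight_mul_add (u := u + 1) hk le_rfl (by omega)
    rw [show (u + 1) * k + 1 = u * k + v + 1 by rw [add_mul]; omega] at this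
    split_ifs at hn this <;> omega

theorem pow_mul_rpow_eq_sqrt_pow {x e : ℝ} (hx : 0 < x) {N M : ℕ} (h : (M : ℝ) = 2 * (N + e)) :
    x ^ N * x ^ e = √x ^ M := by
  rw [← rpow_natCast x N, ← rpow_add hx, ← rpow_natCast (√x) M, h, rpow_mul (sqrt_nonneg x),
    rpow_two, sq_sqrt hx.le]

section Kappa

variable {k : ℕ} (hk : 2 ≤ k) {κ : ℕ → ℝ} (hκ1 : κ 1 = 1)
    (hmul : ∀ m n : ℕ, Nat.Coprime m n → κ (m * n) = κ m * κ n)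
    (hκv : ∀ p : ℕ, p.Prime → ∀ u v : ℕ, 2 ≤ v → v ≤ k →
      κ (p ^ (u * k + v)) = (p : ℝ) ^ (-(u : ℝ) - 1))
    (hκ1' : ∀ p : ℕ, p.Prime → ∀ u : ℕ,
      κ (p ^ (u * k + 1)) = (k : ℝ) * (p : ℝ) ^ (-(u : ℝ) - 1 / 2))
include hk hκ1 hκv hκ1'

theorem exists_pow_mul_kappa_eq {p : ℕ} (hp : p.Prime) (n : ℕ) :
    ∃ c : ℝ, 1 ≤ c ∧ c ≤ k ∧ (p : ℝ) ^ n * κ (p ^ n) = c * √p ^ kappaWeight k n := by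
  have hk1 : (1 : ℝ) ≤ k := by exact_mod_cast (by omega : 1 ≤ k)
  have hp0 : (0 : ℝ) < p := by exact_mod_cast hp.pos
  rcases Nat.eq_zero_or_pos n with rfl | hn
  · exact ⟨1, le_rfl, hk1, by simp [hκ1, kappaWeight]⟩
  obtain ⟨u, v, hv, hvk, rfl⟩ := exists_eq_mul_add_of_pos (k := k) (by omega) hn
  have hw := kappaWeight_mul_add (u := u) hk hv hvk
  rcases eq_or_ne v 1 with rfl | hv1
  · refine ⟨k, hk1, le_rfl, ?_⟩
    rw [hκ1' p hp u, mul_left_comm, pow_mul_rpow_eq_sqrt_pow hp0]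
    rw [if_pos rfl] at hw
    have hw' : (kappaWeight k (u * k + 1) : ℝ) + 2 * (u + 1) = 2 * (u * k + 1) + 1 := by
      exact_mod_cast hw
    push_cast; linarith
  · refine ⟨1, le_rfl, hk1, ?_⟩
    rw [hκv p hp u v (by omega) hvk, one_mul, pow_mul_rpow_eq_sqrt_pow hp0]
    rw [if_neg hv1, add_zero] at hw
    have hw' : (kappaWeight k (u * k + v) : ℝ) + 2 * (u + 1) = 2 * (u * k + v) := by
      exact_mod_cast hw
    push_cast; linarith

theorem kappa_prime_pow_nonneg {p : ℕ} (hp : p.Prime) (j : ℕ) : 0 ≤ κ (p ^ j) := by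
  obtain ⟨c, hc, -, hcj⟩ := exists_pow_mul_kappa_eq hk hκ1 hκv hκ1' hp j
  have : 0 ≤ (p : ℝ) ^ j * κ (p ^ j) := hcj ▸ by positivity
  exact nonneg_of_mul_nonneg_right this (pow_pos (Nat.cast_pos.2 hp.pos) j)

theorem sum_range_succ_pow_mul_kappa_le {p : ℕ} (hp : p.Prime) (m : ℕ) :
    ∑ j ∈ range (m + 1), (p : ℝ) ^ j * κ (p ^ j) ≤
      (1 + k / (√p - 1)) * ((p : ℝ) ^ m * κ (p ^ m)) := by
  have hs : 1 < √(p : ℝ) := by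
    rw [lt_sqrt zero_le_one, one_pow]; exact_mod_cast hp.one_lt
  choose c hc1 hck hc using exists_pow_mul_kappa_eq hk hκ1 hκv hκ1' hp
  refine sum_range_succ_le_of_le_of_le_mul (g := fun n => √(p : ℝ) ^ kappaWeight k n) hs
    k.cast_nonneg (pow_nonneg (sqrt_nonneg _) _) (fun n => ?_) (fun n => ?_) (fun n => ?_) m
  · rw [← pow_succ']
    exact pow_le_pow_right₀ hs.le (kappaWeight_strictMono hk n.lt_succ_self)
  · rw [hc]; exact le_mul_of_one_le_left (by positivity) (hc1 n)
  · rw [hc]; gcongr; exact hck n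

include hmul in
theorem sum_divisors_mul_kappa_le {n : ℕ} (hn : n ≠ 0) :
    ∑ d ∈ n.divisors, (d : ℝ) * κ d ≤ (∏ p ∈ n.primeFactors, (1 + k / (√p - 1))) * (n * κ n) :=
  sum_divisors_le_prod_primeFactors_mul (f := fun n => n * κ n) (by simp [hκ1])
    (fun m n hmn => by simp only [Nat.cast_mul, hmul m n hmn]; ring)
    (fun p hp j => mul_nonneg (Nat.cast_nonneg _) (kappa_prime_pow_nonneg hk hκ1 hκv hκ1' hp j))
    (fun p hp m => by
      simpa only [Nat.cast_pow] using sum_range_succ_pow_mul_kappa_le hk hκ1 hκv hκ1' hp m) hn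

end Kappa

/-- For the multiplicative function `κ` of the singular-series analysis one has
`Σ_{1 ≤ a ≤ A} κ(q/(q;a)) ≪ A q^ε κ(q)` uniformly in `q` and `A ≥ 1`. -/
theorem stmt_15 (k : ℕ) (hk : 2 ≤ k) (ε : ℝ) (hε : 0 < ε) (κ : ℕ → ℝ)
    (hκ1 : κ 1 = 1)
    (hmul : ∀ m n : ℕ, Nat.Coprime m n → κ (m * n) = κ m * κ n)
    (hκv : ∀ p : ℕ, p.Prime → ∀ u v : ℕ, 2 ≤ v → v ≤ k →
      κ (p ^ (u * k + v)) = (p : ℝ) ^ (-(u : ℝ) - 1))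
    (hκ1' : ∀ p : ℕ, p.Prime → ∀ u : ℕ,
      κ (p ^ (u * k + 1)) = (k : ℝ) * (p : ℝ) ^ (-(u : ℝ) - 1 / 2)) :
    ∃ C : ℝ, 0 < C ∧ ∀ q : ℕ, 1 ≤ q → ∀ A : ℝ, 1 ≤ A →
      ∑ a ∈ Finset.Icc 1 ⌊A⌋₊, κ (q / Nat.gcd q a)
        ≤ C * A * (q : ℝ) ^ ε * κ q := by
  have hκ0 {n : ℕ} (hn : n ≠ 0) : 0 ≤ κ n :=
    nonneg_of_prime_pow_nonneg hκ1 hmul (fun p hp => kappa_prime_pow_nonneg hk hκ1 hκv hκ1' hp) hn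
  have hg0 (p : ℕ) (hp : p.Prime) : 0 ≤ (k : ℝ) / (√p - 1) :=
    div_nonneg k.cast_nonneg (sub_nonneg.2 (one_le_sqrt.2 (by exact_mod_cast hp.one_lt.le)))
  obtain ⟨C, hC, hCn⟩ := exists_prod_primeFactors_one_add_le_mul_rpow hg0
    (tendsto_const_nhds.div_atTop (tendsto_atTop_add_const_right _ _
      (tendsto_sqrt_atTop.comp tendsto_natCast_atTop_atTop))) hε
  refine ⟨C, hC, fun q hq A hA => ?_⟩
  have hq0 : q ≠ 0 := by omega
  have hκq : 0 ≤ κ q := hκ0 hq0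
  calc ∑ a ∈ Icc 1 ⌊A⌋₊, κ (q / q.gcd a)
      ≤ A / q * ∑ d ∈ q.divisors, d * κ d :=
        sum_Icc_apply_div_gcd_le hq0 (fun d hd => hκ0 (Nat.pos_of_mem_divisors hd).ne')
          (by linarith)
    _ ≤ A / q * ((C * q ^ ε) * (q * κ q)) := by
        gcongr
        exact (sum_divisors_mul_kappa_le hk hκ1 hmul hκv hκ1' hq0).trans
          (by gcongr; exact hCn q hq0)
    _ = C * A * q ^ ε * κ q := by field_simp
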